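/- Let P(λ) = [[A(λ), B(λ)], [-C(λ), D(λ)]] be a polynomial system matrix with transfer function G(λ). Suppose A(λ) and C(λ) are right coprime and A(λ)^{-1}B(λ) is proper. If H_2(λ) is a right minimal basis of G(λ) and H_1(λ) := -A(λ)^{-1}B(λ)H_2(λ), then [H_1(λ); H_2(λ)] is a right minimal basis of P(λ), and the right minimal indices of P(λ) and G(λ) are the same. -/

import Mathlib

open Polynomial Matrix

noncomputable section

variable {F : Type*} [Field F]

/-- The natural embedding of a polynomial matrix into the rational functions. -/
def toRF {a b : Type*} (M : Matrix a b (Polynomial F)) : Matrix a b (RatFunc F) :=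
  M.map (algebraMap (Polynomial F) (RatFunc F))

/-- A rational function is proper if the degree of its numerator is at most that of its
denominator. -/
def IsProperRat (r : RatFunc F) : Prop := r.num.degree ≤ r.denom.degree

/-- Degree (as a natural number) of the `j`-th column of a polynomial matrix. -/
def colDegNat {a : Type*} [Fintype a] {l : ℕ} (N : Matrix a (Fin l) (Polynomial F))
    (j : Fin l) : ℕ :=
  Finset.univ.sup fun i => (N i j).natDegree

/-- The order of a polynomial matrix: the sum of its column degrees. -/
def matOrder {a : Type*} [Fintype a] {l : ℕ} (N : Matrix a (Fin l) (Polynomial F)) : ℕ :=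
  ∑ j, colDegNat N j

/-- The multiset of column degrees of a polynomial matrix. -/
def colDegs {a : Type*} [Fintype a] {l : ℕ} (N : Matrix a (Fin l) (Polynomial F)) : Multiset ℕ :=
  Finset.univ.val.map fun j => colDegNat N j

/-- The columns of the polynomial matrix `N`, regarded as rational vectors, form a basis of
the right null-space of the rational matrix `M`. -/
def IsRightPolyBasis {a b : Type*} [Fintype a] [Fintype b] {l : ℕ}
    (M : Matrix a b (RatFunc F)) (N : Matrix b (Fin l) (Polynomial F)) : Prop :=
  LinearIndependent (RatFunc F) (fun j : Fin l => (toRF N)ᵀ j) ∧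
    Submodule.span (RatFunc F) (Set.range fun j : Fin l => (toRF N)ᵀ j) =
      LinearMap.ker M.mulVecLin

/-- The columns of the polynomial matrix `N` form a basis of the left null-space of `M`. -/
def IsLeftPolyBasis {a b : Type*} [Fintype a] [Fintype b] {l : ℕ}
    (M : Matrix a b (RatFunc F)) (N : Matrix a (Fin l) (Polynomial F)) : Prop :=
  LinearIndependent (RatFunc F) (fun j : Fin l => (toRF N)ᵀ j) ∧
    Submodule.span (RatFunc F) (Set.range fun j : Fin l => (toRF N)ᵀ j) =
      LinearMap.ker M.vecMulLinear

/-- A right minimal basis: a right polynomial basis of least order. -/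
def IsRightMinimalBasis {a b : Type*} [Fintype a] [Fintype b] {l : ℕ}
    (M : Matrix a b (RatFunc F)) (N : Matrix b (Fin l) (Polynomial F)) : Prop :=
  IsRightPolyBasis M N ∧
    ∀ (l' : ℕ) (N' : Matrix b (Fin l') (Polynomial F)), IsRightPolyBasis M N' →
      matOrder N ≤ matOrder N'

/-- A left minimal basis: a left polynomial basis of least order. -/
def IsLeftMinimalBasis {a b : Type*} [Fintype a] [Fintype b] {l : ℕ}
    (M : Matrix a b (RatFunc F)) (N : Matrix a (Fin l) (Polynomial F)) : Prop :=
  IsLeftPolyBasis M N ∧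
    ∀ (l' : ℕ) (N' : Matrix a (Fin l') (Polynomial F)), IsLeftPolyBasis M N' →
      matOrder N ≤ matOrder N'

/-- `s` is the multiset of right minimal indices of `M`. -/
def HasRightMinimalIndices {a b : Type*} [Fintype a] [Fintype b]
    (M : Matrix a b (RatFunc F)) (s : Multiset ℕ) : Prop :=
  ∃ (l : ℕ) (N : Matrix b (Fin l) (Polynomial F)), IsRightMinimalBasis M N ∧ colDegs N = s

/-- `s` is the multiset of left minimal indices of `M`. -/
def HasLeftMinimalIndices {a b : Type*} [Fintype a] [Fintype b]
    (M : Matrix a b (RatFunc F)) (s : Multiset ℕ) : Prop :=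
  ∃ (l : ℕ) (N : Matrix a (Fin l) (Polynomial F)), IsLeftMinimalBasis M N ∧ colDegs N = s

/-!
Since `A` is invertible, `(x, y)` lies in the null-space of `P` iff `x = -A⁻¹B y` and
`G y = 0`, so `[N₁; N₂] ↦ N₂` matches the polynomial bases of `P` with those polynomial bases
`N₂` of `G` for which `-A⁻¹B N₂` is polynomial. Since `A⁻¹B` is proper (its entries have
valuation at most 1 at infinity), the top block `N₁ = -A⁻¹B N₂` never has larger column degrees
than `N₂`, so the correspondence preserves column degrees. Right
coprimeness `X A + Y C = 1` gives `-A⁻¹B N₂ = (Y D - X B) N₂` whenever `G N₂ = 0`, so every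
polynomial basis of `G` lifts to one of `P`.
-/

section PolynomialMatrix

variable {a b c : Type*}

lemma toRF_mul [Fintype b] (M : Matrix a b (Polynomial F)) (N : Matrix b c (Polynomial F)) :
    toRF (M * N) = toRF M * toRF N :=
  Matrix.map_mul

lemma toRF_add (M N : Matrix a b (Polynomial F)) : toRF (M + N) = toRF M + toRF N :=
  Matrix.map_add _ (map_add _) _ _

lemma toRF_sub (M N : Matrix a b (Polynomial F)) : toRF (M - N) = toRF M - toRF N :=
  Matrix.map_sub _ (map_sub _) _ _

lemma toRF_neg (M : Matrix a b (Polynomial F)) : toRF (-M) = -toRF M :=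
  Matrix.map_neg _ (map_neg _) _

lemma toRF_one [DecidableEq a] : toRF (1 : Matrix a a (Polynomial F)) = 1 :=
  Matrix.map_one _ (map_zero _) (map_one _)

lemma toRF_fromBlocks {d : Type*} (A : Matrix a b (Polynomial F)) (B : Matrix a c (Polynomial F))
    (C : Matrix d b (Polynomial F)) (D : Matrix d c (Polynomial F)) :
    toRF (fromBlocks A B C D) = fromBlocks (toRF A) (toRF B) (toRF C) (toRF D) :=
  fromBlocks_map A B C D _

lemma toRF_fromRows (M₁ : Matrix a c (Polynomial F)) (M₂ : Matrix b c (Polynomial F)) :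
    toRF (fromRows M₁ M₂) = fromRows (toRF M₁) (toRF M₂) :=
  fromRows_map M₁ M₂ _

lemma isUnit_det_toRF [Fintype a] [DecidableEq a] {A : Matrix a a (Polynomial F)}
    (hA : A.det ≠ 0) : IsUnit (toRF A).det := by
  rw [toRF, ← RingHom.mapMatrix_apply, ← RingHom.map_det, isUnit_iff_ne_zero]
  exact (map_ne_zero_iff _ (IsFractionRing.injective (Polynomial F) (RatFunc F))).mpr hA

end PolynomialMatrix

section Degree

open WithZero

lemma isProperRat_iff_intDegree_nonpos {r : RatFunc F} : IsProperRat r ↔ r.intDegree ≤ 0 := by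
  by_cases hr : r = 0
  · simp [IsProperRat, hr]
  rw [IsProperRat, degree_eq_natDegree (RatFunc.num_ne_zero hr),
    degree_eq_natDegree (RatFunc.denom_ne_zero r), Nat.cast_le, RatFunc.intDegree]
  omega

lemma IsProperRat.neg {r : RatFunc F} (h : IsProperRat r) : IsProperRat (-r) := by
  rwa [isProperRat_iff_intDegree_nonpos, RatFunc.intDegree_neg,
    ← isProperRat_iff_intDegree_nonpos]

open scoped Classical in
lemma IsProperRat.inftyValuation_le_one {r : RatFunc F} (h : IsProperRat r) :
    RatFunc.inftyValuation F r ≤ 1 := by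
  by_cases hr : r = 0
  · simp [hr]
  rw [RatFunc.inftyValuation_apply, RatFunc.inftyValuation_of_nonzero F hr, ← exp_zero, exp_le_exp]
  exact isProperRat_iff_intDegree_nonpos.mp h

open scoped Classical in
lemma inftyValuation_algebraMap_le_exp_iff {p : Polynomial F} {d : ℕ} :
    RatFunc.inftyValuation F (algebraMap (Polynomial F) (RatFunc F) p) ≤ exp (d : ℤ) ↔
      p.natDegree ≤ d := by
  by_cases hp : p = 0
  · simp [hp]
  rw [RatFunc.inftyValuation_apply, RatFunc.inftyValuation.polynomial F hp, exp_le_exp, Nat.cast_le]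

lemma colDegNat_le_of_toRF_eq_mul {a b : Type*} [Fintype a] [Fintype b] {l : ℕ}
    {R : Matrix a b (RatFunc F)} (hR : ∀ i k, IsProperRat (R i k))
    {N₁ : Matrix a (Fin l) (Polynomial F)} {N₂ : Matrix b (Fin l) (Polynomial F)}
    (h : toRF N₁ = R * toRF N₂) (j : Fin l) : colDegNat N₁ j ≤ colDegNat N₂ j := by
  classical
  refine Finset.sup_le fun i _ => inftyValuation_algebraMap_le_exp_iff.mp ?_
  have hentry : algebraMap (Polynomial F) (RatFunc F) (N₁ i j) = (R * toRF N₂) i j := by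
    rw [← h]; rfl
  rw [hentry, mul_apply]
  refine Valuation.map_sum_le _ fun k _ => ?_
  rw [Valuation.map_mul]
  refine mul_le_of_le_one_of_le ((hR i k).inftyValuation_le_one) ?_
  exact inftyValuation_algebraMap_le_exp_iff.mpr
    (Finset.le_sup (f := fun k => (N₂ k j).natDegree) (Finset.mem_univ k))

end Degree

section ColumnDegrees

variable {a b : Type*} [Fintype a] [Fintype b] {l : ℕ}

lemma colDegNat_fromRows (N₁ : Matrix a (Fin l) (Polynomial F))
    (N₂ : Matrix b (Fin l) (Polynomial F)) (j : Fin l) :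
    colDegNat (fromRows N₁ N₂) j = max (colDegNat N₁ j) (colDegNat N₂ j) := by
  rw [colDegNat, ← Finset.univ_disjSum_univ, Finset.sup_disjSum]
  rfl

lemma colDegNat_toRows₂_le (N : Matrix (a ⊕ b) (Fin l) (Polynomial F)) (j : Fin l) :
    colDegNat N.toRows₂ j ≤ colDegNat N j := by
  conv_rhs => rw [← fromRows_toRows N, colDegNat_fromRows]
  exact le_max_right _ _

lemma matOrder_toRows₂_le (N : Matrix (a ⊕ b) (Fin l) (Polynomial F)) :
    matOrder N.toRows₂ ≤ matOrder N :=
  Finset.sum_le_sum fun j _ => colDegNat_toRows₂_le N j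

lemma colDegNat_fromRows_of_toRF_eq_mul {R : Matrix a b (RatFunc F)}
    (hR : ∀ i k, IsProperRat (R i k)) {N₁ : Matrix a (Fin l) (Polynomial F)}
    {N₂ : Matrix b (Fin l) (Polynomial F)} (h : toRF N₁ = R * toRF N₂) :
    colDegNat (fromRows N₁ N₂) = colDegNat N₂ :=
  funext fun j => by
    rw [colDegNat_fromRows, max_eq_right (colDegNat_le_of_toRF_eq_mul hR h j)]

lemma matOrder_fromRows_of_toRF_eq_mul {R : Matrix a b (RatFunc F)}
    (hR : ∀ i k, IsProperRat (R i k)) {N₁ : Matrix a (Fin l) (Polynomial F)}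
    {N₂ : Matrix b (Fin l) (Polynomial F)} (h : toRF N₁ = R * toRF N₂) :
    matOrder (fromRows N₁ N₂) = matOrder N₂ := by
  rw [matOrder, colDegNat_fromRows_of_toRF_eq_mul hR h, matOrder]

lemma colDegs_fromRows_of_toRF_eq_mul {R : Matrix a b (RatFunc F)}
    (hR : ∀ i k, IsProperRat (R i k)) {N₁ : Matrix a (Fin l) (Polynomial F)}
    {N₂ : Matrix b (Fin l) (Polynomial F)} (h : toRF N₁ = R * toRF N₂) :
    colDegs (fromRows N₁ N₂) = colDegs N₂ := by
  rw [colDegs, colDegNat_fromRows_of_toRF_eq_mul hR h, colDegs]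

end ColumnDegrees

section NullSpaceBases

variable {a b : Type*} [Fintype a] [Fintype b] {M : Matrix a b (RatFunc F)}

lemma IsRightPolyBasis.transpose_toRF_mem_ker {l : ℕ} {N : Matrix b (Fin l) (Polynomial F)}
    (hN : IsRightPolyBasis M N) (j : Fin l) : (toRF N)ᵀ j ∈ LinearMap.ker M.mulVecLin :=
  hN.2 ▸ Submodule.subset_span ⟨j, rfl⟩

lemma IsRightPolyBasis.mul_toRF_eq_zero {l : ℕ} {N : Matrix b (Fin l) (Polynomial F)}
    (hN : IsRightPolyBasis M N) : M * toRF N = 0 := by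
  ext i j
  exact congrFun (hN.transpose_toRF_mem_ker j) i

lemma IsRightMinimalBasis.of_matOrder_le {l l₀ : ℕ} {N₀ : Matrix b (Fin l₀) (Polynomial F)}
    (h₀ : IsRightMinimalBasis M N₀) {N : Matrix b (Fin l) (Polynomial F)}
    (hN : IsRightPolyBasis M N) (hle : matOrder N ≤ matOrder N₀) : IsRightMinimalBasis M N :=
  ⟨hN, fun _ N' hN' => hle.trans (h₀.2 _ N' hN')⟩

end NullSpaceBases

section SystemMatrix

variable {K : Type*} [CommRing K] {n m p : Type*} [Fintype m]

def graphLin (Q : Matrix n m K) : (m → K) →ₗ[K] (n ⊕ m → K) :=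
  (LinearEquiv.sumArrowLequivProdArrow n m K K).symm.toLinearMap ∘ₗ
    Q.mulVecLin.prod LinearMap.id

lemma graphLin_apply (Q : Matrix n m K) (y : m → K) : graphLin Q y = Sum.elim (Q *ᵥ y) y := by
  ext (i | i) <;> rfl

lemma graphLin_injective (Q : Matrix n m K) : Function.Injective (graphLin Q) :=
  fun _ _ h => funext fun i => congrFun h (Sum.inr i)

lemma eq_neg_inv_mul_mulVec_of_mulVec_add_mulVec_eq_zero [Fintype n] [DecidableEq n]
    {A : Matrix n n K} (hA : IsUnit A.det) {B : Matrix n m K} {x : n → K} {y : m → K}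
    (h : A *ᵥ x + B *ᵥ y = 0) : x = -(A⁻¹ * B) *ᵥ y := by
  have := congrArg (A⁻¹ *ᵥ ·) h
  simp only [mulVec_add, mulVec_mulVec, nonsing_inv_mul _ hA, one_mulVec, mulVec_zero] at this
  rw [neg_mulVec, eq_neg_of_add_eq_zero_left this]

lemma fromBlocks_mulVec_graphLin [Fintype n] [DecidableEq n] [Fintype p] (A : Matrix n n K)
    (hA : IsUnit A.det) (B : Matrix n m K) (C : Matrix p n K) (D : Matrix p m K) (y : m → K) :
    fromBlocks A B (-C) D *ᵥ graphLin (-(A⁻¹ * B)) y =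
      Sum.elim (0 : n → K) ((D + C * A⁻¹ * B) *ᵥ y) := by
  rw [graphLin_apply, fromBlocks_mulVec, Sum.elim_comp_inl, Sum.elim_comp_inr]
  congr 1
  · rw [mulVec_mulVec, Matrix.mul_neg, ← Matrix.mul_assoc, mul_nonsing_inv _ hA,
      Matrix.one_mul, neg_mulVec, neg_add_cancel]
  · rw [add_mulVec, neg_mulVec, neg_mulVec, mulVec_neg, neg_neg, mulVec_mulVec,
      ← Matrix.mul_assoc, add_comm]

lemma ker_fromBlocks_mulVecLin [Fintype n] [DecidableEq n] [Fintype p] (A : Matrix n n K)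
    (hA : IsUnit A.det) (B : Matrix n m K) (C : Matrix p n K) (D : Matrix p m K) :
    LinearMap.ker (fromBlocks A B (-C) D).mulVecLin =
      (LinearMap.ker (D + C * A⁻¹ * B).mulVecLin).map (graphLin (-(A⁻¹ * B))) := by
  ext v
  simp only [LinearMap.mem_ker, mulVecLin_apply, Submodule.mem_map]
  constructor
  · intro hv
    obtain ⟨x, y, rfl⟩ : ∃ x y, v = Sum.elim x y := ⟨_, _, (Sum.elim_comp_inl_inr v).symm⟩
    have hupper : A *ᵥ x + B *ᵥ y = 0 := by
      simpa [fromBlocks_mulVec] using congrArg (· ∘ Sum.inl) hv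
    rw [eq_neg_inv_mul_mulVec_of_mulVec_add_mulVec_eq_zero hA hupper, ← graphLin_apply] at hv ⊢
    rw [fromBlocks_mulVec_graphLin A hA] at hv
    exact ⟨y, by simpa using congrArg (· ∘ Sum.inr) hv, rfl⟩
  · rintro ⟨y, hy, rfl⟩
    rw [fromBlocks_mulVec_graphLin A hA, hy, Sum.elim_zero_zero]

end SystemMatrix

section CoprimeLift

variable {K : Type*} [CommRing K] {n m p l : Type*} [Fintype n] [DecidableEq n] [Fintype m]
  [Fintype p]

lemma neg_inv_mul_mul_eq_of_mul_add_mul_eq_one {A : Matrix n n K} (hA : IsUnit A.det)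
    {B : Matrix n m K} {C : Matrix p n K} {D : Matrix p m K} {X : Matrix n n K}
    {Y : Matrix n p K} (hXY : X * A + Y * C = 1) {V : Matrix m l K}
    (hV : (D + C * A⁻¹ * B) * V = 0) : -(A⁻¹ * B) * V = (Y * D - X * B) * V := by
  have hCV : C * A⁻¹ * B * V = -(D * V) := by
    rw [← eq_neg_of_add_eq_zero_right (by rwa [Matrix.add_mul] at hV)]
  calc -(A⁻¹ * B) * V = -((X * A + Y * C) * (A⁻¹ * B * V)) := by
        rw [hXY, Matrix.one_mul, Matrix.neg_mul]
    _ = -(X * (A * A⁻¹) * B * V + Y * (C * A⁻¹ * B * V)) := by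
        simp only [Matrix.add_mul, Matrix.mul_assoc]
    _ = (Y * D - X * B) * V := by
        rw [mul_nonsing_inv _ hA, Matrix.mul_one, hCV, Matrix.sub_mul, Matrix.mul_neg,
          Matrix.mul_assoc Y, Matrix.mul_assoc X]
        abel

end CoprimeLift

section SystemMatrixBases

variable {n m p : Type*} [Fintype n] [DecidableEq n] [Fintype m] [Fintype p]
  {A : Matrix n n (RatFunc F)} {B : Matrix n m (RatFunc F)} {C : Matrix p n (RatFunc F)}
  {D : Matrix p m (RatFunc F)} {l : ℕ}

lemma isRightPolyBasis_fromBlocks_fromRows_iff (hA : IsUnit A.det)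
    {N₁ : Matrix n (Fin l) (Polynomial F)} {N₂ : Matrix m (Fin l) (Polynomial F)}
    (h : toRF N₁ = -(A⁻¹ * B) * toRF N₂) :
    IsRightPolyBasis (fromBlocks A B (-C) D) (fromRows N₁ N₂) ↔
      IsRightPolyBasis (D + C * A⁻¹ * B) N₂ := by
  have hcols : (fun j => (toRF (fromRows N₁ N₂))ᵀ j) =
      graphLin (-(A⁻¹ * B)) ∘ fun j => (toRF N₂)ᵀ j := by
    funext j
    rw [toRF_fromRows, h, Function.comp_apply, graphLin_apply]
    ext (i | i) <;> rfl
  rw [IsRightPolyBasis, IsRightPolyBasis, hcols, ker_fromBlocks_mulVecLin A hA, Set.range_comp,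
    Submodule.span_image, (Submodule.map_injective_of_injective (graphLin_injective _)).eq_iff,
    LinearMap.linearIndependent_iff_of_injOn _ (graphLin_injective _).injOn]

lemma IsRightPolyBasis.toRF_toRows₁_eq (hA : IsUnit A.det)
    {N : Matrix (n ⊕ m) (Fin l) (Polynomial F)}
    (hN : IsRightPolyBasis (fromBlocks A B (-C) D) N) :
    toRF N.toRows₁ = -(A⁻¹ * B) * toRF N.toRows₂ := by
  ext i j
  have hcol := hN.transpose_toRF_mem_ker j
  rw [ker_fromBlocks_mulVecLin A hA] at hcol
  obtain ⟨y, -, hy⟩ := hcol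
  have hy₂ : y = fun k => toRF N.toRows₂ k j := funext fun k => congrFun hy (Sum.inr k)
  have hy₁ := congrFun hy (Sum.inl i)
  rw [graphLin_apply, hy₂] at hy₁
  exact hy₁.symm

lemma IsRightPolyBasis.toRows₂ (hA : IsUnit A.det) {N : Matrix (n ⊕ m) (Fin l) (Polynomial F)}
    (hN : IsRightPolyBasis (fromBlocks A B (-C) D) N) :
    IsRightPolyBasis (D + C * A⁻¹ * B) N.toRows₂ :=
  (isRightPolyBasis_fromBlocks_fromRows_iff hA (hN.toRF_toRows₁_eq hA)).mp
    (by rwa [fromRows_toRows])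

end SystemMatrixBases

lemma exists_toRF_eq_neg_inv_mul_mul_toRF {n m p l : Type*} [Fintype n] [DecidableEq n]
    [Fintype m] [Fintype p] {A : Matrix n n (Polynomial F)} (hA : A.det ≠ 0)
    {B : Matrix n m (Polynomial F)} {C : Matrix p n (Polynomial F)}
    {D : Matrix p m (Polynomial F)}
    (hcoprime : ∃ (X : Matrix n n (Polynomial F)) (Y : Matrix n p (Polynomial F)),
      X * A + Y * C = 1)
    {N : Matrix m l (Polynomial F)} (hN : (toRF D + toRF C * (toRF A)⁻¹ * toRF B) * toRF N = 0) :
    ∃ N₁ : Matrix n l (Polynomial F), toRF N₁ = -((toRF A)⁻¹ * toRF B) * toRF N := by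
  obtain ⟨X, Y, hXY⟩ := hcoprime
  have hXY' : toRF X * toRF A + toRF Y * toRF C = 1 := by
    rw [← toRF_mul, ← toRF_mul, ← toRF_add, hXY, toRF_one]
  refine ⟨(Y * D - X * B) * N, ?_⟩
  rw [neg_inv_mul_mul_eq_of_mul_add_mul_eq_one (isUnit_det_toRF hA) hXY' hN, toRF_mul, toRF_sub,
    toRF_mul, toRF_mul]

/-- Let `P = [[A,B],[-C,D]]` be a polynomial system matrix with transfer
function `G = D + C A⁻¹ B`.  If `A` and `C` are right coprime, `A⁻¹ B` is proper, `H₂` is a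
right minimal basis of `G` and `H₁ := -A⁻¹ B H₂`, then `[H₁;H₂]` is a right minimal basis of
`P`, and the right minimal indices of `P` and `G` coincide. -/
theorem rightMinimalBasis_psm_of_rightMinimalBasis_transfer
    {n p m l : ℕ}
    (A : Matrix (Fin n) (Fin n) (Polynomial F))
    (B : Matrix (Fin n) (Fin m) (Polynomial F))
    (C : Matrix (Fin p) (Fin n) (Polynomial F))
    (D : Matrix (Fin p) (Fin m) (Polynomial F))
    (hA : A.det ≠ 0)
    (hcoprime : ∃ (X : Matrix (Fin n) (Fin n) (Polynomial F))
        (Y : Matrix (Fin n) (Fin p) (Polynomial F)), X * A + Y * C = 1)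
    (hproper : ∀ i j, IsProperRat (((toRF A)⁻¹ * toRF B) i j))
    (G : Matrix (Fin p) (Fin m) (RatFunc F))
    (hG : G = toRF D + toRF C * (toRF A)⁻¹ * toRF B)
    (P : Matrix (Fin n ⊕ Fin p) (Fin n ⊕ Fin m) (RatFunc F))
    (hP : P = toRF (Matrix.fromBlocks A B (-C) D))
    (H₁ : Matrix (Fin n) (Fin l) (Polynomial F))
    (H₂ : Matrix (Fin m) (Fin l) (Polynomial F))
    (hH₂ : IsRightMinimalBasis G H₂)
    (hH₁ : toRF H₁ = -((toRF A)⁻¹ * toRF B * toRF H₂)) :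
    IsRightMinimalBasis P (Matrix.fromRows H₁ H₂) ∧
    (∀ s : Multiset ℕ, HasRightMinimalIndices P s ↔ HasRightMinimalIndices G s) := by
  rw [toRF_fromBlocks, toRF_neg] at hP
  subst hP hG
  have hAu := isUnit_det_toRF hA
  have hQ : ∀ i j, IsProperRat ((-((toRF A)⁻¹ * toRF B)) i j) := fun i j => (hproper i j).neg
  have hH : toRF H₁ = -((toRF A)⁻¹ * toRF B) * toRF H₂ := by rw [hH₁, Matrix.neg_mul]
  have hbasis := (isRightPolyBasis_fromBlocks_fromRows_iff hAu hH).mpr hH₂.1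
  have hord := matOrder_fromRows_of_toRF_eq_mul hQ hH
  have hmin : IsRightMinimalBasis _ (fromRows H₁ H₂) := ⟨hbasis, fun _ N hN =>
    hord ▸ (hH₂.2 _ _ (hN.toRows₂ hAu)).trans (matOrder_toRows₂_le N)⟩
  refine ⟨hmin, fun s => ⟨?_, ?_⟩⟩
  · rintro ⟨l', N, hN, rfl⟩
    refine ⟨l', N.toRows₂, hH₂.of_matOrder_le (hN.1.toRows₂ hAu) ?_, ?_⟩
    · calc matOrder N.toRows₂ ≤ matOrder N := matOrder_toRows₂_le N
        _ ≤ matOrder (fromRows H₁ H₂) := hN.2 _ _ hbasis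
        _ = matOrder H₂ := hord
    · simpa only [fromRows_toRows] using
        (colDegs_fromRows_of_toRF_eq_mul hQ (hN.1.toRF_toRows₁_eq hAu)).symm
  · rintro ⟨l', N, hN, rfl⟩
    obtain ⟨N₁, hN₁⟩ := exists_toRF_eq_neg_inv_mul_mul_toRF hA hcoprime hN.1.mul_toRF_eq_zero
    refine ⟨l', fromRows N₁ N, hmin.of_matOrder_le
      ((isRightPolyBasis_fromBlocks_fromRows_iff hAu hN₁).mpr hN.1) ?_,
      colDegs_fromRows_of_toRF_eq_mul hQ hN₁⟩
    rw [matOrder_fromRows_of_toRF_eq_mul hQ hN₁, hord]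
    exact hN.2 _ _ hH₂.1

end
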